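/- Let P be a flow-based polytope with edge set E, fix an edge η = (s,t) ∈ E and a directed tree T with all edges in E. Let F_s(T) be the set of vertices f of P with Flip_f(T) ∈ Arb_s and f_η = 0, and let F_t(T) be the set of vertices f of P with Flip_f(T) ∈ Arb_t and f_η = 1. Then there exists a bijection π : F_s(T) → F_t(T) such that whenever π(f) = f', one has f_e = f'_e for all e ∈ E \ (T ∪ {η}). -/

import Mathlib

open Finset

open scoped Classical

/-- The set `E₀` of non-loop directed edges on vertex set `Fin n`. -/
def E0 (n : ℕ) : Finset (Fin n × Fin n) :=
  Finset.univ.filter (fun e => e.1 ≠ e.2)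

/-- The reverse of a directed edge. -/
def rev {n : ℕ} (e : Fin n × Fin n) : Fin n × Fin n := (e.2, e.1)

/-- The underlying undirected (simple) graph of a set of directed edges. -/
def undirGraph (n : ℕ) (D : Finset (Fin n × Fin n)) : SimpleGraph (Fin n) where
  Adj u v := u ≠ v ∧ ((u, v) ∈ D ∨ (v, u) ∈ D)
  symm := ⟨fun u v h => ⟨h.1.symm, h.2.symm⟩⟩
  loopless := ⟨fun u h => h.1 rfl⟩

/-- There is a directed walk from `i` to `j` using only edges in `D`. -/
def reachesIn (n : ℕ) (D : Finset (Fin n × Fin n)) (i j : Fin n) : Prop :=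
  Relation.ReflTransGen (fun a b => (a, b) ∈ D) i j

/-- `T` is a directed tree: `n-1` non-loop directed edges whose underlying
undirected edges form a spanning tree of `Fin n`. -/
def IsDirTree (n : ℕ) (T : Finset (Fin n × Fin n)) : Prop :=
  T ⊆ E0 n ∧ T.card = n - 1 ∧ (undirGraph n T).Connected

/-- `A` is an arborescence rooted at `r`: a directed tree such that from every
vertex there is a directed walk to `r` using only edges of `A`. -/
def IsArb (n : ℕ) (r : Fin n) (A : Finset (Fin n × Fin n)) : Prop :=
  IsDirTree n A ∧ ∀ v : Fin n, reachesIn n A v r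

/-- `Flip_f` of a single edge: reverse the edge iff `f e = 1`. -/
noncomputable def flipEdge (n : ℕ) (f : Fin n × Fin n → ℝ) (e : Fin n × Fin n) :
    Fin n × Fin n :=
  if f e = 1 then rev e else e

/-- `Flip_f` of a set of edges. -/
noncomputable def flipSet (n : ℕ) (f : Fin n × Fin n → ℝ)
    (T : Finset (Fin n × Fin n)) : Finset (Fin n × Fin n) :=
  T.image (flipEdge n f)

/-- Membership in the flow-based polytope with variable edge set `E` and
demands `d` (points are extended by zero outside `E`). -/
def memFlowPolytope (n : ℕ) (E : Finset (Fin n × Fin n)) (d : Fin n → ℤ)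
    (x : Fin n × Fin n → ℝ) : Prop :=
  (∀ e, e ∉ E → x e = 0) ∧ (∀ e ∈ E, x e ∈ Set.Icc (0 : ℝ) 1) ∧
    ∀ v : Fin n, (∑ i, x (v, i)) - (∑ i, x (i, v)) = (d v : ℝ)

/-- A vertex of the flow-based polytope: a 0/1 point of the polytope. -/
def IsVertex (n : ℕ) (E : Finset (Fin n × Fin n)) (d : Fin n → ℤ)
    (f : Fin n × Fin n → ℝ) : Prop :=
  memFlowPolytope n E d f ∧ ∀ e ∈ E, f e = 0 ∨ f e = 1

/-- The 0/1 indicator of a set of edges. -/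
def ind (n : ℕ) (S : Finset (Fin n × Fin n)) : Fin n × Fin n → ℝ :=
  fun e => if e ∈ S then 1 else 0

/-- The vertices of the flow-based polytope, encoded by their supports
(sets of edges carrying flow `1`). -/
noncomputable def flowVertices (n : ℕ) (E : Finset (Fin n × Fin n)) (d : Fin n → ℤ) :
    Finset (Finset (Fin n × Fin n)) :=
  Finset.univ.filter (fun S => S ⊆ E ∧ memFlowPolytope n E d (ind n S))

/-- The polynomial `P_{f,r}(x)` of the Bernoulli factory. Since `f` is 0/1,
`x_e^{f_e}(1-x_e)^{1-f_e}` is `x_e` if `f_e = 1` and `1 - x_e` otherwise, and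
`x_e^{1-f_e}(1-x_e)^{f_e}` is `1 - x_e` if `f_e = 1` and `x_e` otherwise. -/
noncomputable def Pfr (n : ℕ) (E : Finset (Fin n × Fin n))
    (f : Fin n × Fin n → ℝ) (r : Fin n) (x : Fin n × Fin n → ℝ) : ℝ :=
  (∏ e ∈ E, if f e = 1 then x e else 1 - x e) *
    ∑ T ∈ Finset.univ.filter
        (fun T : Finset (Fin n × Fin n) =>
          IsDirTree n T ∧ T ⊆ E ∧ IsArb n r (flipSet n f T)),
      ∏ e ∈ T, (if f e = 1 then 1 - x e else x e)

/-- Membership in the circulation hyperplane `Circ̄`. -/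
def memCircBar (n : ℕ) (y : Fin n × Fin n → ℝ) : Prop :=
  ∀ v : Fin n,
    (∑ i ∈ Finset.univ.filter (fun i => i ≠ v), y (v, i)) -
      (∑ i ∈ Finset.univ.filter (fun i => i ≠ v), y (i, v)) = 0

/-- The arborescence-generating polynomial `SArb_r(y)`. -/
noncomputable def SArb (n : ℕ) (r : Fin n) (y : Fin n × Fin n → ℝ) : ℝ :=
  ∑ A ∈ Finset.univ.filter (fun A : Finset (Fin n × Fin n) => IsArb n r A),
    ∏ e ∈ A, y e

/-- The map `M_f`: `M_f(x)_e = x_e (1 - f_e) + (1 - x_ē) f_ē`. -/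
def Mf (n : ℕ) (f x : Fin n × Fin n → ℝ) : Fin n × Fin n → ℝ :=
  fun e => x e * (1 - f e) + (1 - x (rev e)) * f (rev e)

/-!
The bijection is `S ↦ S ∆ C`, where `C` is the fundamental cycle of `η = (s, t)` with respect to
`T`: the edge `η` together with the edges of `T` on the tree path between `s` and `t`.

Suppose `A = Flip_S(T)` is an arborescence rooted at `r` and `Flip_S(η) = (r, q)`. An edge of `A`
lies on its directed path from `q` to `r` iff deleting it separates `q` from `r`; this only depends
on the underlying undirected tree, so the flipped tree edges of `C` are exactly that path.
Toggling `C` therefore reverses the path, which reroots the arborescence at `q`, and adds to the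
flow the directed cycle formed by the path and `(r, q)`, which has zero net flow at every vertex.
As `C` does not depend on `S`, the same involution maps `F_t(T)` back to `F_s(T)`.
-/

section Flip

variable {n : ℕ}

@[simp] lemma rev_rev (e : Fin n × Fin n) : rev (rev e) = e := rfl

lemma flipEdge_ind (S : Finset (Fin n × Fin n)) (e : Fin n × Fin n) :
    flipEdge n (ind n S) e = if e ∈ S then rev e else e := by
  by_cases h : e ∈ S <;> simp [flipEdge, ind, h]

lemma flipEdge_ind_symmDiff (S Q : Finset (Fin n × Fin n)) (e : Fin n × Fin n) :
    flipEdge n (ind n (symmDiff S Q)) e =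
      if e ∈ Q then rev (flipEdge n (ind n S) e) else flipEdge n (ind n S) e := by
  simp only [flipEdge_ind, Finset.mem_symmDiff]
  by_cases hS : e ∈ S <;> by_cases hQ : e ∈ Q <;> simp [hS, hQ]

lemma flipEdge_eq_or (f : Fin n × Fin n → ℝ) (e : Fin n × Fin n) :
    flipEdge n f e = e ∨ flipEdge n f e = rev e := by
  unfold flipEdge; split_ifs <;> simp

lemma eq_or_eq_rev_of_flipEdge_eq {f : Fin n × Fin n → ℝ} {e a : Fin n × Fin n}
    (h : flipEdge n f e = a) : e = a ∨ e = rev a := by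
  rcases flipEdge_eq_or f e with h' | h' <;> rw [h'] at h <;> subst h <;> simp

lemma mem_flipSet {f : Fin n × Fin n → ℝ} {T : Finset (Fin n × Fin n)} {a : Fin n × Fin n} :
    a ∈ flipSet n f T ↔ ∃ e ∈ T, flipEdge n f e = a :=
  Finset.mem_image

lemma undirGraph_flipSet (f : Fin n × Fin n → ℝ) (D : Finset (Fin n × Fin n)) :
    undirGraph n (flipSet n f D) = undirGraph n D := by
  ext u v
  simp only [undirGraph, mem_flipSet, and_congr_right_iff]
  intro _
  constructor
  · rintro (⟨e, he, hfe⟩ | ⟨e, he, hfe⟩) <;>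
      rcases eq_or_eq_rev_of_flipEdge_eq hfe with rfl | rfl <;> simp_all [rev]
  · rintro (h | h)
    · rcases flipEdge_eq_or f (u, v) with h' | h'
      · exact Or.inl ⟨_, h, h'⟩
      · exact Or.inr ⟨_, h, h'⟩
    · rcases flipEdge_eq_or f (v, u) with h' | h'
      · exact Or.inr ⟨_, h, h'⟩
      · exact Or.inl ⟨_, h, h'⟩

end Flip

section Reach

variable {n : ℕ} {D D' : Finset (Fin n × Fin n)} {x y : Fin n}

lemma reachesIn_mono (h : D ⊆ D') (hxy : reachesIn n D x y) : reachesIn n D' x y :=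
  Relation.ReflTransGen.mono (fun _ _ hab => h hab) _ _ hxy

lemma reachesIn_image_rev (h : reachesIn n D x y) : reachesIn n (D.image rev) y x := by
  induction h with
  | refl => exact Relation.ReflTransGen.refl
  | @tail b c _ hbc ih => exact Relation.ReflTransGen.head (Finset.mem_image_of_mem rev hbc) ih

lemma reachesIn_erase_or (a : Fin n × Fin n) (h : reachesIn n D x y) :
    reachesIn n (D.erase a) x y ∨ (reachesIn n D x a.1 ∧ reachesIn n D a.2 y) := by
  induction h with
  | refl => exact Or.inl Relation.ReflTransGen.refl
  | @tail b c hxb hbc ih =>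
    rcases ih with ih | ⟨hxa, hay⟩
    · by_cases hba : (b, c) = a
      · subst hba
        exact Or.inr ⟨hxb, Relation.ReflTransGen.refl⟩
      · exact Or.inl (ih.tail (Finset.mem_erase.2 ⟨hba, hbc⟩))
    · exact Or.inr ⟨hxa, hay.tail hbc⟩

lemma reachable_of_reachesIn (h : reachesIn n D x y) : (undirGraph n D).Reachable x y := by
  induction h with
  | refl => rfl
  | @tail b c _ hbc ih =>
    refine ih.trans ?_
    by_cases hb : b = c
    · rw [hb]
    · exact SimpleGraph.Adj.reachable ⟨hb, Or.inl hbc⟩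

end Reach

lemma card_edgeSet_undirGraph_le {n : ℕ} (D : Finset (Fin n × Fin n)) :
    Nat.card (undirGraph n D).edgeSet ≤ (D.image fun e => s(e.1, e.2)).card := by
  have hsub : (undirGraph n D).edgeSet ⊆ (D.image fun e => s(e.1, e.2) : Set (Sym2 (Fin n))) := by
    intro e he
    induction e using Sym2.ind with
    | h u v =>
      rcases he.2 with h | h
      · exact Finset.mem_image_of_mem _ h
      · rw [Sym2.eq_swap]; exact Finset.mem_image_of_mem _ h
  rw [Nat.card_coe_set_eq, ← Set.ncard_coe_finset]
  exact Set.ncard_le_ncard hsub (Finset.finite_toSet _)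

namespace IsDirTree

variable {n : ℕ} {T : Finset (Fin n × Fin n)}

lemma card_edgeSet_add_one (hT : IsDirTree n T) : Nat.card (undirGraph n T).edgeSet + 1 = n := by
  have hlow := hT.2.2.card_vert_le_card_edgeSet_add_one
  have hpos : 0 < n := Fin.pos_iff_nonempty.2 hT.2.2.nonempty
  have hup := (card_edgeSet_undirGraph_le T).trans Finset.card_image_le
  rw [Nat.card_eq_fintype_card, Fintype.card_fin] at hlow
  rw [hT.2.1] at hup
  omega

lemma isTree (hT : IsDirTree n T) : (undirGraph n T).IsTree :=
  SimpleGraph.isTree_iff_connected_and_card.2 ⟨hT.2.2, by simpa using hT.card_edgeSet_add_one⟩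

lemma rev_notMem (hT : IsDirTree n T) {e : Fin n × Fin n} (he : e ∈ T) : rev e ∉ T := by
  intro hrev
  have hne : e ≠ rev e := fun h => (Finset.mem_filter.1 (hT.1 he)).2 (congrArg Prod.fst h)
  have himage : T.image (fun e => s(e.1, e.2)) =
      (T.erase (rev e)).image (fun e => s(e.1, e.2)) := by
    refine le_antisymm (fun x hx => ?_) (Finset.image_subset_image (Finset.erase_subset _ _))
    obtain ⟨a, ha, rfl⟩ := Finset.mem_image.1 hx
    by_cases har : a = rev e
    · subst har
      exact Finset.mem_image.2 ⟨e, Finset.mem_erase.2 ⟨hne, he⟩, Sym2.eq_swap⟩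
    · exact Finset.mem_image_of_mem _ (Finset.mem_erase.2 ⟨har, ha⟩)
  have hle := (himage ▸ card_edgeSet_undirGraph_le T).trans Finset.card_image_le
  have h2 : 2 ≤ T.card := Finset.one_lt_card.2 ⟨e, he, rev e, hrev, hne⟩
  have := hT.card_edgeSet_add_one
  rw [Finset.card_erase_of_mem hrev, hT.2.1] at hle
  rw [hT.2.1] at h2
  omega

lemma not_reachable_erase (hT : IsDirTree n T) {e : Fin n × Fin n} (he : e ∈ T) :
    ¬ (undirGraph n (T.erase e)).Reachable e.1 e.2 := by
  have hbridge := SimpleGraph.isAcyclic_iff_forall_adj_isBridge.1 hT.isTree.isAcyclic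
    (show (undirGraph n T).Adj e.1 e.2 from ⟨(Finset.mem_filter.1 (hT.1 he)).2, Or.inl he⟩)
  refine fun h => SimpleGraph.isBridge_iff.1 hbridge (h.mono ?_)
  rintro u v ⟨huv, h⟩
  refine ⟨⟨huv, h.imp Finset.mem_of_mem_erase Finset.mem_of_mem_erase⟩, fun hs => ?_⟩
  have hrev : ∀ x ∈ T.erase e, x ≠ rev e := fun x hx hxe =>
    hT.rev_notMem he (hxe ▸ Finset.mem_of_mem_erase hx)
  have huv : s(u, v) = s(e.1, e.2) := ((SimpleGraph.fromEdgeSet_adj _).1 hs).1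
  rcases Sym2.eq_iff.1 huv with ⟨rfl, rfl⟩ | ⟨rfl, rfl⟩ <;> rcases h with h | h
  · exact Finset.notMem_erase e T h
  · exact hrev _ h rfl
  · exact hrev _ h rfl
  · exact Finset.notMem_erase e T h

lemma injOn_flipEdge (hT : IsDirTree n T) (f : Fin n × Fin n → ℝ) :
    Set.InjOn (flipEdge n f) T := by
  intro a ha b hb hab
  rcases flipEdge_eq_or f a with h₁ | h₁ <;> rcases flipEdge_eq_or f b with h₂ | h₂ <;>
    rw [h₁, h₂] at hab
  · exact hab
  · exact absurd (hab ▸ ha : rev b ∈ T) (hT.rev_notMem hb)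
  · exact absurd (hab ▸ hb : rev a ∈ T) (hT.rev_notMem ha)
  · simpa using congrArg rev hab

lemma isDirTree_flipSet (hT : IsDirTree n T) (f : Fin n × Fin n → ℝ) :
    IsDirTree n (flipSet n f T) := by
  refine ⟨fun a ha => ?_, ?_, (undirGraph_flipSet f T).symm ▸ hT.2.2⟩
  · obtain ⟨e, he, rfl⟩ := mem_flipSet.1 ha
    have := (Finset.mem_filter.1 (hT.1 he)).2
    rcases flipEdge_eq_or f e with h | h <;> rw [h] <;> simp [E0, rev, this, Ne.symm this]
  · rw [flipSet, Finset.card_image_of_injOn (hT.injOn_flipEdge f), hT.2.1]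

lemma flipSet_erase (hT : IsDirTree n T) (f : Fin n × Fin n → ℝ) {e : Fin n × Fin n}
    (he : e ∈ T) : flipSet n f (T.erase e) = (flipSet n f T).erase (flipEdge n f e) := by
  ext a
  simp only [flipSet, Finset.mem_image, Finset.mem_erase]
  constructor
  · rintro ⟨x, ⟨hxe, hx⟩, rfl⟩
    exact ⟨fun h => hxe (hT.injOn_flipEdge f hx he h), x, hx, rfl⟩
  · rintro ⟨hae, x, hx, rfl⟩
    exact ⟨x, ⟨fun h => hae (h ▸ rfl), hx⟩, rfl⟩

end IsDirTree

/-- In an arborescence, the directed path from `q` to the root. -/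
noncomputable def rootPath (n : ℕ) (A : Finset (Fin n × Fin n)) (q : Fin n) :
    Finset (Fin n × Fin n) :=
  A.filter (fun a => reachesIn n A q a.1)

lemma reachesIn_rootPath {n : ℕ} {A : Finset (Fin n × Fin n)} {q x y : Fin n}
    (hqx : reachesIn n A q x) (hxy : reachesIn n A x y) : reachesIn n (rootPath n A q) x y := by
  induction hxy with
  | refl => exact Relation.ReflTransGen.refl
  | @tail b c hxb hbc ih => exact ih.tail (Finset.mem_filter.2 ⟨hbc, hqx.trans hxb⟩)

def incidence {n : ℕ} (a : Fin n × Fin n) (v : Fin n) : ℝ :=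
  (if a.1 = v then 1 else 0) - if a.2 = v then 1 else 0

lemma incidence_rev {n : ℕ} (a : Fin n × Fin n) (v : Fin n) :
    incidence (rev a) v = -incidence a v := by
  unfold incidence rev; split_ifs <;> norm_num

lemma incidence_add_incidence {n : ℕ} (x y z v : Fin n) :
    incidence (x, y) v + incidence (y, z) v = incidence (x, z) v := by
  simp only [incidence]; ring

lemma incidence_flipEdge_ind {n : ℕ} (S : Finset (Fin n × Fin n)) (e : Fin n × Fin n)
    (v : Fin n) :
    incidence (flipEdge n (ind n S) e) v = if e ∈ S then -incidence e v else incidence e v := by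
  rw [flipEdge_ind]; split_ifs <;> simp [incidence_rev]

namespace IsArb

variable {n : ℕ} {r : Fin n} {A : Finset (Fin n × Fin n)}

lemma image_fst (hA : IsArb n r A) :
    A.image Prod.fst = Finset.univ.erase r ∧ Set.InjOn Prod.fst (A : Set (Fin n × Fin n)) := by
  have hsub : Finset.univ.erase r ⊆ A.image Prod.fst := by
    intro v hv
    rcases Relation.ReflTransGen.cases_head_iff.1 (hA.2 v) with h | ⟨c, hc, _⟩
    · exact absurd h (Finset.ne_of_mem_erase hv)
    · exact Finset.mem_image.2 ⟨(v, c), hc, rfl⟩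
  have hcard : (Finset.univ.erase r).card = A.card := by
    rw [Finset.card_erase_of_mem (Finset.mem_univ r), Finset.card_univ, Fintype.card_fin,
      hA.1.2.1]
  have hle := Finset.card_le_card hsub
  have hge : (A.image Prod.fst).card ≤ A.card := Finset.card_image_le
  exact ⟨(Finset.eq_of_subset_of_card_le hsub (by omega)).symm, Finset.card_image_iff.1 (by omega)⟩

lemma root_notMem (hA : IsArb n r A) (w : Fin n) : (r, w) ∉ A := fun h =>
  Finset.notMem_erase r Finset.univ (hA.image_fst.1 ▸ Finset.mem_image_of_mem Prod.fst h)

lemma snd_eq_of_mem (hA : IsArb n r A) {v w w' : Fin n} (h : (v, w) ∈ A) (h' : (v, w') ∈ A) :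
    w = w' :=
  congrArg Prod.snd (hA.image_fst.2 h h' rfl)

lemma not_reachesIn_of_mem (hA : IsArb n r A) {x y : Fin n} (hxy : (x, y) ∈ A) :
    ¬ reachesIn n A y x := by
  suffices ∀ x, reachesIn n A x r → ∀ y, (x, y) ∈ A → ¬ reachesIn n A y x from
    this x (hA.2 x) y hxy
  intro x hx
  induction hx using Relation.ReflTransGen.head_induction_on with
  | refl => exact fun y hy _ => hA.root_notMem y hy
  | @head x c hxc _ ih =>
    intro y hxy hyx
    obtain rfl := hA.snd_eq_of_mem hxy hxc
    rcases Relation.ReflTransGen.cases_head_iff.1 hyx with rfl | ⟨w, hyw, hwx⟩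
    · exact (Finset.mem_filter.1 (hA.1.1 hxy)).2 rfl
    · exact ih w hyw (hwx.tail hxy)

lemma mem_rootPath_iff (hA : IsArb n r A) {a : Fin n × Fin n} (ha : a ∈ A) (q : Fin n) :
    a ∈ rootPath n A q ↔ ¬ (undirGraph n (A.erase a)).Reachable q r := by
  constructor
  · intro hqa hqr
    have hcycle := hA.not_reachesIn_of_mem (x := a.1) (y := a.2) ha
    have h₁ := (reachesIn_erase_or a (Finset.mem_filter.1 hqa).2).resolve_right
      fun h => hcycle h.2
    have h₂ := (reachesIn_erase_or a (hA.2 a.2)).resolve_right fun h => hcycle h.1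
    exact hA.1.not_reachable_erase ha
      ((reachable_of_reachesIn h₁).symm.trans (hqr.trans (reachable_of_reachesIn h₂).symm))
  · intro hqr
    by_contra hqa
    exact hqr (reachable_of_reachesIn ((reachesIn_erase_or a (hA.2 q)).resolve_right
      fun h => hqa (Finset.mem_filter.2 ⟨ha, h.1⟩)))

lemma rootPath_root (hA : IsArb n r A) : rootPath n A r = ∅ := by
  refine Finset.eq_empty_of_forall_notMem fun a ha => ?_
  obtain ⟨haA, hra⟩ := Finset.mem_filter.1 ha
  rcases Relation.ReflTransGen.cases_head_iff.1 hra with h | ⟨c, hc, _⟩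
  · exact hA.root_notMem a.2 (h ▸ haA)
  · exact hA.root_notMem c hc

lemma rootPath_eq_insert (hA : IsArb n r A) {q c : Fin n} (hqc : (q, c) ∈ A) :
    rootPath n A q = insert (q, c) (rootPath n A c) := by
  ext ⟨x, y⟩
  rw [Finset.mem_insert, rootPath, rootPath, Finset.mem_filter, Finset.mem_filter, reachesIn,
    Relation.ReflTransGen.cases_head_iff]
  constructor
  · rintro ⟨hxy, rfl | ⟨c', hqc', hc'x⟩⟩
    · exact Or.inl (by rw [hA.snd_eq_of_mem hxy hqc])
    · exact Or.inr ⟨hxy, hA.snd_eq_of_mem hqc hqc' ▸ hc'x⟩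
  · rintro (h | ⟨hxy, hcx⟩)
    · obtain ⟨rfl, rfl⟩ := Prod.mk.inj h
      exact ⟨hqc, Or.inl rfl⟩
    · exact ⟨hxy, Or.inr ⟨c, hqc, hcx⟩⟩

lemma sum_incidence_rootPath (hA : IsArb n r A) (q v : Fin n) :
    ∑ a ∈ rootPath n A q, incidence a v = incidence (q, r) v := by
  induction hA.2 q using Relation.ReflTransGen.head_induction_on with
  | refl => simp [hA.rootPath_root, incidence]
  | @head q c hqc _ ih =>
    have hnot : (q, c) ∉ rootPath n A c := fun h =>
      hA.not_reachesIn_of_mem hqc (Finset.mem_filter.1 h).2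
    rw [hA.rootPath_eq_insert hqc, Finset.sum_insert hnot, ih, incidence_add_incidence]

lemma reachesIn_reroot (hA : IsArb n r A) (q v : Fin n) :
    reachesIn n (A \ rootPath n A q ∪ (rootPath n A q).image rev) v q := by
  have hrev : ∀ {x}, reachesIn n A q x →
      reachesIn n (A \ rootPath n A q ∪ (rootPath n A q).image rev) x q := fun hqx =>
    reachesIn_mono Finset.subset_union_right
      (reachesIn_image_rev (reachesIn_rootPath Relation.ReflTransGen.refl hqx))
  induction hA.2 v using Relation.ReflTransGen.head_induction_on with
  | refl => exact hrev (hA.2 q)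
  | @head v c hvc _ ih =>
    by_cases hpath : (v, c) ∈ rootPath n A q
    · exact hrev (Finset.mem_filter.1 hpath).2
    · exact ih.head (Finset.mem_union_left _ (Finset.mem_sdiff.2 ⟨hvc, hpath⟩))

end IsArb

/-- The tree path between `s` and `t`, as the set of tree edges whose deletion separates them. -/
noncomputable def treePath (n : ℕ) (T : Finset (Fin n × Fin n)) (s t : Fin n) :
    Finset (Fin n × Fin n) :=
  T.filter (fun e => ¬ (undirGraph n (T.erase e)).Reachable s t)

lemma treePath_subset {n : ℕ} (T : Finset (Fin n × Fin n)) (s t : Fin n) :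
    treePath n T s t ⊆ T :=
  Finset.filter_subset _ _

lemma treePath_comm {n : ℕ} (T : Finset (Fin n × Fin n)) (s t : Fin n) :
    treePath n T s t = treePath n T t s := by
  simp only [treePath, SimpleGraph.reachable_comm]

lemma IsDirTree.rootPath_flipSet {n : ℕ} {T : Finset (Fin n × Fin n)} (hT : IsDirTree n T)
    (f : Fin n × Fin n → ℝ) {r : Fin n} (hA : IsArb n r (flipSet n f T)) (q : Fin n) :
    rootPath n (flipSet n f T) q = (treePath n T q r).image (flipEdge n f) := by
  have key : ∀ e ∈ T, flipEdge n f e ∈ rootPath n (flipSet n f T) q ↔ e ∈ treePath n T q r :=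
    fun e he => by
      rw [hA.mem_rootPath_iff (mem_flipSet.2 ⟨e, he, rfl⟩), ← hT.flipSet_erase f he,
        undirGraph_flipSet, treePath, Finset.mem_filter, and_iff_right he]
  ext a
  constructor
  · intro ha
    obtain ⟨e, he, rfl⟩ := mem_flipSet.1 (Finset.filter_subset _ _ ha)
    exact Finset.mem_image_of_mem _ ((key e he).1 ha)
  · intro ha
    obtain ⟨e, he, rfl⟩ := Finset.mem_image.1 ha
    exact (key e (treePath_subset T q r he)).2 he

lemma Finset.sum_symmDiff {α M : Type*} [DecidableEq α] [AddCommGroup M] (S Q : Finset α)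
    (g : α → M) :
    ∑ a ∈ symmDiff S Q, g a = ∑ a ∈ S, g a + ∑ a ∈ Q, if a ∈ S then -g a else g a := by
  have hQ : Q.filter (· ∈ S) = S ∩ Q := by ext; simp [and_comm]
  rw [symmDiff_def, Finset.sup_eq_union, Finset.sum_union disjoint_sdiff_sdiff, Finset.sum_ite,
    Finset.sum_neg_distrib, hQ, Finset.filter_notMem_eq_sdiff,
    ← Finset.sum_sdiff (Finset.inter_subset_left : S ∩ Q ⊆ S), Finset.sdiff_inter_self_left]
  abel

lemma sum_ind_sub_sum_ind {n : ℕ} (S : Finset (Fin n × Fin n)) (v : Fin n) :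
    ∑ i, ind n S (v, i) - ∑ i, ind n S (i, v) = ∑ a ∈ S, incidence a v := by
  have hS : ∑ a ∈ S, incidence a v = ∑ a, ind n S a * incidence a v := by
    simp [ind, ite_mul, Finset.sum_ite_mem]
  rw [hS, Fintype.sum_prod_type]
  simp only [incidence, mul_sub, mul_ite, mul_one, mul_zero, Finset.sum_sub_distrib,
    Finset.sum_ite_irrel, Finset.sum_const_zero, Finset.sum_ite_eq', Finset.mem_univ, if_true]

lemma mem_flowVertices_iff {n : ℕ} {E : Finset (Fin n × Fin n)} {d : Fin n → ℤ}
    {S : Finset (Fin n × Fin n)} :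
    S ∈ flowVertices n E d ↔ S ⊆ E ∧ ∀ v, ∑ a ∈ S, incidence a v = d v := by
  simp only [flowVertices, memFlowPolytope, Finset.mem_filter, Finset.mem_univ, true_and,
    sum_ind_sub_sum_ind]
  refine and_congr_right fun hSE => ⟨fun h => h.2.2, fun h => ⟨fun e he => ?_, fun e _ => ?_, h⟩⟩
  · simp [ind, mt (@hSE e) he]
  · unfold ind; split_ifs <;> simp

noncomputable def fundCycle (n : ℕ) (T : Finset (Fin n × Fin n)) (s t : Fin n) :
    Finset (Fin n × Fin n) :=
  insert (s, t) (treePath n T s t)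

section FundCycle

variable {n : ℕ} {T S : Finset (Fin n × Fin n)} {s t r q : Fin n}

lemma notMem_of_isArb_flipSet (hA : IsArb n r (flipSet n (ind n S) T))
    (hrq : flipEdge n (ind n S) (s, t) = (r, q)) : (s, t) ∉ T := fun h =>
  hA.root_notMem q (hrq ▸ mem_flipSet.2 ⟨_, h, rfl⟩)

lemma treePath_eq_of_flipEdge_eq (hrq : flipEdge n (ind n S) (s, t) = (r, q)) :
    treePath n T s t = treePath n T q r := by
  rcases eq_or_eq_rev_of_flipEdge_eq hrq with h | h <;> simp only [rev, Prod.mk.injEq] at h <;>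
    obtain ⟨rfl, rfl⟩ := h
  exacts [treePath_comm T _ _, rfl]

lemma sum_incidence_flipEdge_fundCycle (hT : IsDirTree n T)
    (hA : IsArb n r (flipSet n (ind n S) T)) (hrq : flipEdge n (ind n S) (s, t) = (r, q))
    (v : Fin n) :
    ∑ e ∈ fundCycle n T s t, incidence (flipEdge n (ind n S) e) v = 0 := by
  have hst : (s, t) ∉ treePath n T s t := fun h =>
    notMem_of_isArb_flipSet hA hrq (treePath_subset T s t h)
  rw [fundCycle, Finset.sum_insert hst, hrq, treePath_eq_of_flipEdge_eq hrq,
    ← Finset.sum_image (f := (incidence · v)) ((hT.injOn_flipEdge _).mono (treePath_subset ..)),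
    ← hT.rootPath_flipSet _ hA q, hA.sum_incidence_rootPath, incidence_add_incidence]
  simp [incidence]

lemma sum_incidence_symmDiff_fundCycle (hT : IsDirTree n T)
    (hA : IsArb n r (flipSet n (ind n S) T)) (hrq : flipEdge n (ind n S) (s, t) = (r, q))
    (v : Fin n) :
    ∑ a ∈ symmDiff S (fundCycle n T s t), incidence a v = ∑ a ∈ S, incidence a v := by
  rw [Finset.sum_symmDiff]
  simp_rw [← incidence_flipEdge_ind]
  rw [sum_incidence_flipEdge_fundCycle hT hA hrq, add_zero]

lemma symmDiff_fundCycle_mem_flowVertices {E : Finset (Fin n × Fin n)} {d : Fin n → ℤ}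
    (hT : IsDirTree n T) (hTE : T ⊆ E) (heta : (s, t) ∈ E) (hS : S ∈ flowVertices n E d)
    (hA : IsArb n r (flipSet n (ind n S) T)) (hrq : flipEdge n (ind n S) (s, t) = (r, q)) :
    symmDiff S (fundCycle n T s t) ∈ flowVertices n E d := by
  rw [mem_flowVertices_iff] at hS ⊢
  have hQE : fundCycle n T s t ⊆ E :=
    Finset.insert_subset heta ((treePath_subset T s t).trans hTE)
  refine ⟨Finset.symmDiff_subset_union.trans (Finset.union_subset hS.1 hQE), fun v => ?_⟩
  rw [sum_incidence_symmDiff_fundCycle hT hA hrq, hS.2 v]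

lemma isArb_flipSet_symmDiff_fundCycle (hT : IsDirTree n T)
    (hA : IsArb n r (flipSet n (ind n S) T)) (hrq : flipEdge n (ind n S) (s, t) = (r, q)) :
    IsArb n q (flipSet n (ind n (symmDiff S (fundCycle n T s t))) T) := by
  refine ⟨hT.isDirTree_flipSet _, fun v => reachesIn_mono ?_ (hA.reachesIn_reroot q v)⟩
  have hR := hT.rootPath_flipSet _ hA q
  rw [← treePath_eq_of_flipEdge_eq hrq] at hR
  intro a ha
  rcases Finset.mem_union.1 ha with ha | ha
  · obtain ⟨haA, haR⟩ := Finset.mem_sdiff.1 ha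
    obtain ⟨e, he, rfl⟩ := mem_flipSet.1 haA
    have heQ : e ∉ fundCycle n T s t := by
      intro h
      rcases Finset.mem_insert.1 h with h | h
      · exact notMem_of_isArb_flipSet hA hrq (h ▸ he)
      · exact haR (hR ▸ Finset.mem_image_of_mem _ h)
    exact mem_flipSet.2 ⟨e, he, by rw [flipEdge_ind_symmDiff, if_neg heQ]⟩
  · obtain ⟨b, hb, rfl⟩ := Finset.mem_image.1 ha
    rw [hR] at hb
    obtain ⟨e, he, rfl⟩ := Finset.mem_image.1 hb
    have heQ : e ∈ fundCycle n T s t := Finset.mem_insert_of_mem he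
    exact mem_flipSet.2 ⟨e, treePath_subset T s t he, by rw [flipEdge_ind_symmDiff, if_pos heQ]⟩

end FundCycle

theorem bijection_Fs_Ft_general (n : ℕ)
    (E : Finset (Fin n × Fin n)) (d : Fin n → ℤ)
    (s t : Fin n) (heta : (s, t) ∈ E)
    (T : Finset (Fin n × Fin n)) (hT : IsDirTree n T) (hTE : T ⊆ E) :
    ∃ π : Finset (Fin n × Fin n) → Finset (Fin n × Fin n),
      Set.BijOn π
        (((flowVertices n E d).filter
            (fun S => IsArb n s (flipSet n (ind n S) T) ∧ (s, t) ∉ S) :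
          Finset (Finset (Fin n × Fin n))) : Set (Finset (Fin n × Fin n)))
        (((flowVertices n E d).filter
            (fun S => IsArb n t (flipSet n (ind n S) T) ∧ (s, t) ∈ S) :
          Finset (Finset (Fin n × Fin n))) : Set (Finset (Fin n × Fin n))) ∧
      ∀ S ∈ (flowVertices n E d).filter
          (fun S => IsArb n s (flipSet n (ind n S) T) ∧ (s, t) ∉ S),
        ∀ e ∈ E, e ∉ T → e ≠ (s, t) → (e ∈ S ↔ e ∈ π S) := by
  have hstQ : (s, t) ∈ fundCycle n T s t := Finset.mem_insert_self _ _
  have hcancel : ∀ S, symmDiff (symmDiff S (fundCycle n T s t)) (fundCycle n T s t) = S :=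
    fun S => symmDiff_symmDiff_cancel_right _ S
  refine ⟨fun S => symmDiff S (fundCycle n T s t),
    Set.InvOn.bijOn ⟨fun S _ => hcancel S, fun S _ => hcancel S⟩ ?_ ?_, ?_⟩
  · intro S hS
    obtain ⟨hSV, hA, hst⟩ := Finset.mem_filter.1 hS
    have hrq : flipEdge n (ind n S) (s, t) = (s, t) := by rw [flipEdge_ind, if_neg hst]
    exact Finset.mem_filter.2 ⟨symmDiff_fundCycle_mem_flowVertices hT hTE heta hSV hA hrq,
      isArb_flipSet_symmDiff_fundCycle hT hA hrq, Finset.mem_symmDiff.2 (Or.inr ⟨hstQ, hst⟩)⟩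
  · intro S hS
    obtain ⟨hSV, hA, hst⟩ := Finset.mem_filter.1 hS
    have hrq : flipEdge n (ind n S) (s, t) = (t, s) := by rw [flipEdge_ind, if_pos hst]; rfl
    refine Finset.mem_filter.2 ⟨symmDiff_fundCycle_mem_flowVertices hT hTE heta hSV hA hrq,
      isArb_flipSet_symmDiff_fundCycle hT hA hrq, fun h => ?_⟩
    rcases Finset.mem_symmDiff.1 h with h | h
    exacts [h.2 hstQ, h.2 hst]
  · intro S _ e _ heT hne
    have heQ : e ∉ fundCycle n T s t := fun h =>
      (Finset.mem_insert.1 h).elim hne fun h => heT (treePath_subset T s t h)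
    rw [Finset.mem_symmDiff]
    tauto

/-- bijection between `F_s(T)` and `F_t(T)` preserving all
coordinates outside `T ∪ {η}`. -/
theorem bijection_Fs_Ft (n : ℕ) (hn : 2 ≤ n)
    (E : Finset (Fin n × Fin n)) (hE : E ⊆ E0 n) (d : Fin n → ℤ)
    (s t : Fin n) (heta : (s, t) ∈ E)
    (T : Finset (Fin n × Fin n)) (hT : IsDirTree n T) (hTE : T ⊆ E) :
    ∃ π : Finset (Fin n × Fin n) → Finset (Fin n × Fin n),
      Set.BijOn π
        (((flowVertices n E d).filter
            (fun S => IsArb n s (flipSet n (ind n S) T) ∧ (s, t) ∉ S) :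
          Finset (Finset (Fin n × Fin n))) : Set (Finset (Fin n × Fin n)))
        (((flowVertices n E d).filter
            (fun S => IsArb n t (flipSet n (ind n S) T) ∧ (s, t) ∈ S) :
          Finset (Finset (Fin n × Fin n))) : Set (Finset (Fin n × Fin n))) ∧
      ∀ S ∈ (flowVertices n E d).filter
          (fun S => IsArb n s (flipSet n (ind n S) T) ∧ (s, t) ∉ S),
        ∀ e ∈ E, e ∉ T → e ≠ (s, t) → (e ∈ S ↔ e ∈ π S) :=
  bijection_Fs_Ft_general n E d s t heta T hT hTE
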